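/- arXiv:1408.1989 — 3 statements merged into one kernel-verified Lean document; each statement's English description precedes it below -/
import Mathlib

section
/- First variation of the squared Ricci tensor at an Einstein metric (algebraic version of Lemma 2): with (r∘r)_t(x,y) := r_t(Ric_t x, y), where Ric_t : V → V is the unique endomorphism satisfying g_t(Ric_t x, y) = r_t(x, y) for all x, y, one has (d/dt)|_{t=0} (r∘r)_t = 2λ·r' − λ²·h, where h := (d/dt)|_{t=0} g_t and r' := (d/dt)|_{t=0} r_t. -/
/-!
`Ric_t x` is the solution of the linear system `g_t (Ric_t x, ·) = r_t (x, ·)`, so by Cramer's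
rule its coordinates are differentiable at `0`. Since `Ric_0 x = λ x`, differentiating this system
gives `g (Ric' x, y) = r' (x, y) - λ h (x, y)`, and the product rule applied to
`r_t (Ric_t x, y)` yields `r' (λ x, y) + r_0 (Ric' x, y) = λ r' (x, y) + λ g (Ric' x, y)
= 2 λ r' (x, y) - λ² h (x, y)`.
-/

open Matrix Filter Topology

theorem LinearMap.sum_repr_smul_apply_basis {R V W M ι : Type*} [CommSemiring R]
    [AddCommMonoid V] [Module R V] [AddCommMonoid W] [Module R W] [AddCommMonoid M] [Module R M]
    [Fintype ι] (b : Module.Basis ι R V) (B : V →ₗ[R] W →ₗ[R] M) (v : V) (w : W) :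
    ∑ i, b.repr v i • B (b i) w = B v w := by
  conv_rhs => rw [← b.sum_repr v]
  simp only [map_sum, map_smul, LinearMap.sum_apply, LinearMap.smul_apply]

section MatrixCalculus

variable {𝕜 n : Type*} [NontriviallyNormedField 𝕜] [Fintype n] [DecidableEq n] {t₀ : 𝕜}

theorem differentiableAt_det {A : 𝕜 → Matrix n n 𝕜}
    (hA : ∀ i j, DifferentiableAt 𝕜 (fun t => A t i j) t₀) :
    DifferentiableAt 𝕜 (fun t => (A t).det) t₀ := by
  simp only [det_apply']
  exact .fun_sum fun σ _ => (DifferentiableAt.fun_finsetProd fun i _ => hA (σ i) i).const_mul _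

theorem differentiableAt_apply_of_mulVec_eq {A : 𝕜 → Matrix n n 𝕜} {v w : 𝕜 → n → 𝕜}
    (hA : ∀ i j, DifferentiableAt 𝕜 (fun t => A t i j) t₀)
    (hw : ∀ i, DifferentiableAt 𝕜 (fun t => w t i) t₀) (hdet : (A t₀).det ≠ 0)
    (hAv : ∀ t, A t *ᵥ v t = w t) (i : n) :
    DifferentiableAt 𝕜 (fun t => v t i) t₀ := by
  have hdetA := differentiableAt_det hA
  have hcramer : DifferentiableAt 𝕜 (fun t => ((A t).updateCol i (w t)).det) t₀ := by
    refine differentiableAt_det fun k l => ?_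
    by_cases hl : l = i
    · simpa [updateCol_apply, hl] using hw k
    · simpa [updateCol_apply, hl] using hA k l
  -- Cramer's rule, valid near `t₀` where `A t` stays invertible
  have hv : ∀ᶠ t in 𝓝 t₀, v t i = ((A t).updateCol i (w t)).det / (A t).det := by
    filter_upwards [hdetA.continuousAt.eventually_ne hdet] with t ht
    rw [eq_div_iff ht, ← cramer_apply, ← hAv t, cramer_eq_adjugate_mulVec, mulVec_mulVec,
      adjugate_mul, smul_mulVec, one_mulVec, Pi.smul_apply, smul_eq_mul, mul_comm]
  exact (hcramer.div hdetA hdet).congr_of_eventuallyEq hv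

end MatrixCalculus

section BilinearCalculus

variable {𝕜 : Type*} [NontriviallyNormedField 𝕜] {V W F : Type*} [AddCommGroup V] [Module 𝕜 V]
  [AddCommGroup W] [Module 𝕜 W] [NormedAddCommGroup F] [NormedSpace 𝕜 F] {t₀ : 𝕜}

theorem exists_linearMap₂_of_hasDerivAt {B : 𝕜 → V →ₗ[𝕜] W →ₗ[𝕜] F} {B' : V → W → F}
    (hB : ∀ v w, HasDerivAt (fun t => B t v w) (B' v w) t₀) :
    ∃ D : V →ₗ[𝕜] W →ₗ[𝕜] F, (fun v w => D v w) = B' :=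
  ⟨LinearMap.mk₂ 𝕜 B'
    (fun v₁ v₂ w => (hB (v₁ + v₂) w).unique (by simpa using (hB v₁ w).fun_add (hB v₂ w)))
    (fun c v w => (hB (c • v) w).unique (by simpa using (hB v w).fun_const_smul c))
    (fun v w₁ w₂ => (hB v (w₁ + w₂)).unique (by simpa using (hB v w₁).fun_add (hB v w₂)))
    (fun c v w => (hB v (c • w)).unique (by simpa using (hB v w).fun_const_smul c)), rfl⟩

theorem hasDerivAt_apply_apply_of_repr {ι : Type*} [Fintype ι] (b : Module.Basis ι 𝕜 V)
    {B : 𝕜 → V →ₗ[𝕜] W →ₗ[𝕜] F} {B' : V →ₗ[𝕜] W →ₗ[𝕜] F}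
    (hB : ∀ v w, HasDerivAt (fun t => B t v w) (B' v w) t₀) {u : 𝕜 → V} {u' : V}
    (hu : ∀ i, HasDerivAt (fun t => b.repr (u t) i) (b.repr u' i) t₀) (w : W) :
    HasDerivAt (fun t => B t (u t) w) (B' (u t₀) w + B t₀ u' w) t₀ := by
  have hsum := HasDerivAt.fun_sum (u := Finset.univ) fun i _ => (hu i).fun_smul (hB (b i) w)
  simpa only [Finset.sum_add_distrib, LinearMap.sum_repr_smul_apply_basis] using hsum

end BilinearCalculus

theorem LinearMap.BilinForm.nondegenerate_of_pos {R V : Type*} [CommRing R] [PartialOrder R]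
    [AddCommGroup V] [Module R V] {B : LinearMap.BilinForm R V}
    (hB : ∀ v, v ≠ 0 → 0 < B v v) : B.Nondegenerate :=
  ⟨fun v hv => by_contra fun hne => (hB v hne).ne' (hv v),
    fun v hv => by_contra fun hne => (hB v hne).ne' (hv v)⟩

theorem exists_hasDerivAt_repr_of_apply_eq {𝕜 V ι : Type*} [NontriviallyNormedField 𝕜]
    [AddCommGroup V] [Module 𝕜 V] [Fintype ι] [DecidableEq ι] (b : Module.Basis ι 𝕜 V)
    {t₀ : 𝕜} {B : 𝕜 → LinearMap.BilinForm 𝕜 V}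
    (hB : ∀ v w, DifferentiableAt 𝕜 (fun t => B t v w) t₀) (hB₀ : (B t₀).Nondegenerate)
    {C : 𝕜 → V → 𝕜} (hC : ∀ w, DifferentiableAt 𝕜 (fun t => C t w) t₀)
    {u : 𝕜 → V} (hu : ∀ t w, B t (u t) w = C t w) :
    ∃ u' : V, ∀ i, HasDerivAt (fun t => b.repr (u t) i) (b.repr u' i) t₀ := by
  have hdiff : ∀ i, DifferentiableAt 𝕜 (fun t => b.repr (u t) i) t₀ :=
    differentiableAt_apply_of_mulVec_eq (A := fun t => (LinearMap.BilinForm.toMatrix b (B t))ᵀ)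
      (w := fun t i => C t (b i)) (fun i j => by simpa using hB (b j) (b i)) (fun i => hC (b i))
      (by rwa [det_transpose, ← LinearMap.BilinForm.nondegenerate_iff_det_ne_zero])
      (fun t => by
        ext i
        rw [← hu t (b i), ← LinearMap.sum_repr_smul_apply_basis b (B t)]
        simp only [mulVec, dotProduct, transpose_apply, LinearMap.BilinForm.toMatrix_apply,
          smul_eq_mul, mul_comm])
  exact ⟨b.equivFun.symm fun i => deriv (fun t => b.repr (u t) i) t₀,
    fun i => by simpa only [← b.equivFun_apply, b.equivFun.apply_symm_apply]
      using (hdiff i).hasDerivAt⟩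

theorem stmt_4_general
    {V : Type*} [AddCommGroup V] [Module ℝ V] [FiniteDimensional ℝ V]
    (g r : ℝ → V →ₗ[ℝ] V →ₗ[ℝ] ℝ)
    (hgpos : ∀ (t : ℝ) (x : V), x ≠ 0 → 0 < g t x x)
    (lam : ℝ)
    (hEinstein : ∀ x y : V, r 0 x y = lam * g 0 x y)
    (h r' : V → V → ℝ)
    (hg' : ∀ x y : V, HasDerivAt (fun t => g t x y) (h x y) 0)
    (hr' : ∀ x y : V, HasDerivAt (fun t => r t x y) (r' x y) 0)
    (Ric : ℝ → V →ₗ[ℝ] V)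
    (hRic : ∀ (t : ℝ) (x y : V), g t (Ric t x) y = r t x y)
    (x y : V) :
    HasDerivAt (fun t => r t (Ric t x) y)
      (2 * lam * r' x y - lam ^ 2 * h x y) 0 := by
  obtain ⟨h, rfl⟩ := exists_linearMap₂_of_hasDerivAt hg'
  obtain ⟨r', rfl⟩ := exists_linearMap₂_of_hasDerivAt hr'
  beta_reduce at hg' hr' ⊢
  have hnd : (g 0).Nondegenerate := LinearMap.BilinForm.nondegenerate_of_pos (hgpos 0)
  have hRic₀ : Ric 0 x = lam • x :=
    sub_eq_zero.mp <| hnd.1 _ fun w => by simp [hRic, hEinstein]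
  obtain ⟨u', hu'⟩ := exists_hasDerivAt_repr_of_apply_eq (Module.finBasis ℝ V)
    (fun v w => (hg' v w).differentiableAt) hnd (fun w => (hr' x w).differentiableAt) (hRic · x)
  have hgu' : g 0 u' y = r' x y - lam * h x y := by
    have hg := hasDerivAt_apply_apply_of_repr _ hg' hu' y
    simp only [hRic] at hg
    rw [(hr' x y).unique hg, hRic₀]
    simp only [map_smul, LinearMap.smul_apply, smul_eq_mul, add_sub_cancel_left]
  refine (hasDerivAt_apply_apply_of_repr _ hr' hu' y).congr_deriv ?_
  rw [hRic₀, hEinstein, hgu', map_smul, LinearMap.smul_apply, smul_eq_mul]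
  ring

/-- algebraic version of Lemma 2: first variation of the squared
Ricci tensor at an Einstein metric: with `(r∘r)_t(x,y) = r_t(Ric_t x, y)` one has
`(d/dt)|₀ (r∘r)_t = 2λ·r' − λ²·h`. -/
theorem stmt_4
    {V : Type*} [AddCommGroup V] [Module ℝ V] [FiniteDimensional ℝ V]
    (g r : ℝ → V →ₗ[ℝ] V →ₗ[ℝ] ℝ)
    (hgsymm : ∀ (t : ℝ) (x y : V), g t x y = g t y x)
    (hgpos : ∀ (t : ℝ) (x : V), x ≠ 0 → 0 < g t x x)
    (hrsymm : ∀ (t : ℝ) (x y : V), r t x y = r t y x)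
    (lam : ℝ)
    (hEinstein : ∀ x y : V, r 0 x y = lam * g 0 x y)
    (h r' : V → V → ℝ)
    (hg' : ∀ x y : V, HasDerivAt (fun t => g t x y) (h x y) 0)
    (hr' : ∀ x y : V, HasDerivAt (fun t => r t x y) (r' x y) 0)
    (Ric : ℝ → V →ₗ[ℝ] V)
    (hRic : ∀ (t : ℝ) (x y : V), g t (Ric t x) y = r t x y)
    (x y : V) :
    HasDerivAt (fun t => r t (Ric t x) y)
      (2 * lam * r' x y - lam ^ 2 * h x y) 0 :=
  stmt_4_general g r hgpos lam hEinstein h r' hg' hr' Ric hRic x y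
end

section
/- First variation of ∘R(r) at an Einstein metric (algebraic version of Lemma 3): with r_t(x,y) := Σ_{i,j} g_t^{ij} R_t(x, w_i, y, w_j) the g_t-Ricci contraction of R_t and ∘R_t(k)(x,y) := Σ_{i,j,p,q} g_t^{ip} g_t^{jq} R_t(w_i, x, w_j, y) k(w_p, w_q) for a symmetric bilinear form k (where {w_i} is any fixed basis of V and (g_t^{ij}) is the inverse of the matrix (g_t(w_i, w_j))), if r_0 = λ·g_0 then (d/dt)|_{t=0} [∘R_t(r_t)] = −λ·∘R(h) + ∘R(r') + λ·r', where R := R_0, h := (d/dt)|_{t=0} g_t, r' := (d/dt)|_{t=0} r_t, and ∘R is taken with respect to g_0. -/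
/-!
In the basis `w` everything becomes matrix algebra. With `N = G⁻¹` the inverse Gram matrix and
`A_ij = R(w_i, x, w_j, y)`, one has `∘R(k)(x, y) = Σ A_ij (N K N)_ij` and, by pair symmetry,
`r(x, y) = Σ N_ij A_ij`. Differentiate `∘R_t(r_t)` by the product rule, with `N' = -N H N` and
`r_0 = λ G`: each of the two terms in which `N` is differentiated contributes `-λ ∘R(h)`, the term
with `R'` contributes `λ Σ N_ij R'_ij`, and the term with `r'` is `∘R(r')`. Since
`r' = -∘R(h) + Σ N_ij R'_ij`, this is `-λ ∘R(h) + ∘R(r') + λ r'`.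
-/

open Matrix

theorem LinearMap.isUnit_det_toMatrix₂_of_pos {V ι : Type*} [AddCommGroup V] [Module ℝ V]
    [Fintype ι] [DecidableEq ι] (b : Module.Basis ι ℝ V) {B : V →ₗ[ℝ] V →ₗ[ℝ] ℝ}
    (hB : ∀ x, x ≠ 0 → 0 < B x x) : IsUnit (toMatrix₂ b b B).det := by
  refine isUnit_iff_ne_zero.2 ((separatingLeft_iff_det_ne_zero b).1 fun x hx => ?_)
  by_contra hx0
  exact (hB x hx0).ne' (hx x)

theorem LinearMap.isSymm_toMatrix₂ {V ι : Type*} [AddCommGroup V] [Module ℝ V]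
    [Fintype ι] [DecidableEq ι] (b : Module.Basis ι ℝ V) {B : V →ₗ[ℝ] V →ₗ[ℝ] ℝ}
    (hB : ∀ x y, B x y = B y x) : (toMatrix₂ b b B).IsSymm :=
  IsSymm.ext fun i j => by simp only [toMatrix₂_apply, hB]

namespace Matrix

variable {ι : Type*} [Fintype ι]

theorem hasDerivAt_iff_forall_apply {M : ℝ → Matrix ι ι ℝ} {M' : Matrix ι ι ℝ} {t : ℝ} :
    HasDerivAt M M' t ↔ ∀ i j, HasDerivAt (fun s => M s i j) (M' i j) t :=
  hasDerivAt_pi.trans <| forall_congr' fun _ => hasDerivAt_pi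

theorem isSymm_of_hasDerivAt {M : ℝ → Matrix ι ι ℝ} {M' : Matrix ι ι ℝ} {t : ℝ}
    (hM : HasDerivAt M M' t) (hsymm : ∀ s, (M s).IsSymm) : M'.IsSymm := by
  refine IsSymm.ext fun i j => ?_
  have hji := hasDerivAt_iff_forall_apply.1 hM j i
  simp only [fun s => (hsymm s).apply i j] at hji
  exact hji.unique (hasDerivAt_iff_forall_apply.1 hM i j)

theorem hasDerivAt_inv [DecidableEq ι] {M : ℝ → Matrix ι ι ℝ} {M' : Matrix ι ι ℝ} {t : ℝ}
    (hM : HasDerivAt M M' t) (hdet : IsUnit (M t).det) :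
    HasDerivAt (fun s => (M s)⁻¹) (-((M t)⁻¹ * M' * (M t)⁻¹)) t := by
  -- The product topology on matrices is the one of the `L^∞`-operator norm, a Banach algebra norm.
  let _ := Matrix.linftyOpNormedRing (n := ι) (α := ℝ)
  let _ := Matrix.linftyOpNormedAlgebra (n := ι) (α := ℝ) (R := ℝ)
  have hunit : IsUnit (M t) := (isUnit_iff_isUnit_det _).2 hdet
  simp only [nonsing_inv_eq_ringInverse]
  refine ((hasFDerivAt_ringInverse (𝕜 := ℝ) hunit.unit).comp_hasDerivAt t hM).congr_deriv ?_
  simp [nonsing_inv_eq_ringInverse]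

end Matrix

section CircContract

variable {ι : Type*} [Fintype ι]

/-- With `P = Q = (g^{ij})`, `A = (R(w_i, x, w_j, y))` and `K = (k(w_p, w_q))` this is `∘R(k)(x, y)`. -/
def circContract (P Q A K : Matrix ι ι ℝ) : ℝ :=
  ∑ i, ∑ j, ∑ p, ∑ q, P i p * Q j q * A i j * K p q

theorem circContract_eq_sum (P Q A K : Matrix ι ι ℝ) :
    circContract P Q A K = ∑ i, ∑ j, A i j * (P * K * Qᵀ) i j := by
  simp only [circContract, mul_apply, transpose_apply, Finset.mul_sum, Finset.sum_mul]
  refine Finset.sum_congr rfl fun i _ => Finset.sum_congr rfl fun j _ => ?_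
  rw [Finset.sum_comm]
  exact Finset.sum_congr rfl fun q _ => Finset.sum_congr rfl fun p _ => by ring

theorem circContract_smul_right (P Q A K : Matrix ι ι ℝ) (c : ℝ) :
    circContract P Q A (c • K) = c * circContract P Q A K := by
  simp only [circContract, Matrix.smul_apply, smul_eq_mul, Finset.mul_sum]
  exact Finset.sum_congr rfl fun i _ => Finset.sum_congr rfl fun j _ =>
    Finset.sum_congr rfl fun p _ => Finset.sum_congr rfl fun q _ => by ring

theorem HasDerivAt.circContract {P Q A K : ℝ → Matrix ι ι ℝ} {P' Q' A' K' : Matrix ι ι ℝ}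
    {t : ℝ} (hP : HasDerivAt P P' t) (hQ : HasDerivAt Q Q' t) (hA : HasDerivAt A A' t)
    (hK : HasDerivAt K K' t) :
    HasDerivAt (fun s => circContract (P s) (Q s) (A s) (K s))
      (circContract P' (Q t) (A t) (K t) + circContract (P t) Q' (A t) (K t) +
        circContract (P t) (Q t) A' (K t) + circContract (P t) (Q t) (A t) K') t := by
  simp only [hasDerivAt_iff_forall_apply] at hP hQ hA hK
  unfold _root_.circContract
  refine HasDerivAt.congr_deriv (.fun_sum fun i _ => .fun_sum fun j _ => .fun_sum fun p _ =>
    .fun_sum fun q _ => (((hP i p).mul (hQ j q)).mul (hA i j)).mul (hK p q)) ?_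
  simp only [← Finset.sum_add_distrib, Pi.mul_apply]
  exact Finset.sum_congr rfl fun i _ => Finset.sum_congr rfl fun j _ =>
    Finset.sum_congr rfl fun p _ => Finset.sum_congr rfl fun q _ => by ring

/-- The terms of the first variation of `∘R_t(r_t)` in which `r_t = λ g_t` is not differentiated;
`-(G⁻¹ * H * G⁻¹)` is the derivative of `G⁻¹`. -/
theorem circContract_variation_of_einstein [DecidableEq ι] {G H : Matrix ι ι ℝ}
    (hG : IsUnit G.det) (hGsymm : G.IsSymm) (hHsymm : H.IsSymm) (A A' : Matrix ι ι ℝ)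
    (lam : ℝ) :
    circContract (-(G⁻¹ * H * G⁻¹)) G⁻¹ A (lam • G) +
        circContract G⁻¹ (-(G⁻¹ * H * G⁻¹)) A (lam • G) + circContract G⁻¹ G⁻¹ A' (lam • G) =
      -lam * circContract G⁻¹ G⁻¹ A H +
        lam * (∑ i, ∑ j, A i j * (-(G⁻¹ * H * G⁻¹)) i j + ∑ i, ∑ j, A' i j * G⁻¹ i j) := by
  have hN : G⁻¹ᵀ = G⁻¹ := hGsymm.inv.eq
  have hN' : (-(G⁻¹ * H * G⁻¹))ᵀ = -(G⁻¹ * H * G⁻¹) := by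
    simp [transpose_mul, hN, hHsymm.eq, Matrix.mul_assoc]
  have hN'G : -(G⁻¹ * H * G⁻¹) * G * G⁻¹ = -(G⁻¹ * H * G⁻¹) := by
    rw [Matrix.mul_assoc, mul_nonsing_inv _ hG, Matrix.mul_one]
  simp only [circContract_smul_right]
  simp only [circContract_eq_sum, hN, hN', hN'G, nonsing_inv_mul _ hG, Matrix.one_mul,
    Matrix.neg_apply, mul_neg, Finset.sum_neg_distrib]
  ring

theorem hasDerivAt_circContract_of_einstein [DecidableEq ι] {G A K : ℝ → Matrix ι ι ℝ}
    {H A' K' : Matrix ι ι ℝ} {lam r' : ℝ} (hG : HasDerivAt G H 0) (hA : HasDerivAt A A' 0)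
    (hK : HasDerivAt K K' 0) (hGsymm : ∀ t, (G t).IsSymm) (hG0 : IsUnit (G 0).det)
    (hK0 : K 0 = lam • G 0)
    (hr : HasDerivAt (fun t => ∑ i, ∑ j, (G t)⁻¹ i j * A t i j) r' 0) :
    HasDerivAt (fun t => circContract (G t)⁻¹ (G t)⁻¹ (A t) (K t))
      (-lam * circContract (G 0)⁻¹ (G 0)⁻¹ (A 0) H + circContract (G 0)⁻¹ (G 0)⁻¹ (A 0) K' +
        lam * r') 0 := by
  have hN := Matrix.hasDerivAt_inv hG hG0
  have hr' : r' = ∑ i, ∑ j, A 0 i j * (-((G 0)⁻¹ * H * (G 0)⁻¹)) i j +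
      ∑ i, ∑ j, A' i j * (G 0)⁻¹ i j := by
    rw [hasDerivAt_iff_forall_apply] at hN hA
    refine hr.unique (HasDerivAt.congr_deriv (.fun_sum fun i _ => .fun_sum fun j _ =>
      (hN i j).mul (hA i j)) ?_)
    simp only [← Finset.sum_add_distrib]
    exact Finset.sum_congr rfl fun i _ => Finset.sum_congr rfl fun j _ => by ring
  refine (hN.circContract hN hA hK).congr_deriv ?_
  have hvar := circContract_variation_of_einstein hG0 (hGsymm 0) (isSymm_of_hasDerivAt hG hGsymm)
    (A 0) A' lam
  rw [hK0, hr']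
  linarith

end CircContract

theorem stmt_5_general
    {V : Type*} [AddCommGroup V] [Module ℝ V]
    {ι : Type*} [Fintype ι] [DecidableEq ι]
    (w : Module.Basis ι ℝ V)
    (g : ℝ → V →ₗ[ℝ] V →ₗ[ℝ] ℝ)
    (hgsymm : ∀ (t : ℝ) (x y : V), g t x y = g t y x)
    (hgpos : ∀ (t : ℝ) (x : V), x ≠ 0 → 0 < g t x x)
    (R : ℝ → V →ₗ[ℝ] V →ₗ[ℝ] V →ₗ[ℝ] V →ₗ[ℝ] ℝ)
    (hR1 : ∀ (t : ℝ) (x y z u : V), R t x y z u = -R t y x z u)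
    (hR2 : ∀ (t : ℝ) (x y z u : V), R t x y z u = -R t x y u z)
    (h : V → V → ℝ) (R' : V → V → V → V → ℝ)
    (hg' : ∀ x y : V, HasDerivAt (fun t => g t x y) (h x y) 0)
    (hR' : ∀ x y z u : V, HasDerivAt (fun t => R t x y z u) (R' x y z u) 0)
    -- the inverse of the Gram matrix of `g_t` in the fixed basis `w`
    (ginv : ℝ → ι → ι → ℝ)
    (hginv : ∀ t : ℝ, ginv t = fun i j => (Matrix.of fun i j => g t (w i) (w j))⁻¹ i j)
    -- the `g_t`-Ricci contraction of `R_t`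
    (rt : ℝ → V → V → ℝ)
    (hrt : ∀ (t : ℝ) (x y : V), rt t x y = ∑ i, ∑ j, ginv t i j * R t x (w i) y (w j))
    (lam : ℝ)
    (hEinstein : ∀ x y : V, rt 0 x y = lam * g 0 x y)
    -- `r'`, the derivative of `r_t` at `t = 0`
    (r' : V → V → ℝ)
    (hr' : ∀ x y : V, HasDerivAt (fun t => rt t x y) (r' x y) 0)
    -- `∘R` taken with respect to `g_0`
    (circR : (V → V → ℝ) → V → V → ℝ)
    (hcircR : ∀ (k : V → V → ℝ) (x y : V), circR k x y =
      ∑ i, ∑ j, ∑ p, ∑ q,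
        ginv 0 i p * ginv 0 j q * R 0 (w i) x (w j) y * k (w p) (w q))
    -- `∘R_t(r_t)`
    (circRt : ℝ → V → V → ℝ)
    (hcircRt : ∀ (t : ℝ) (x y : V), circRt t x y =
      ∑ i, ∑ j, ∑ p, ∑ q,
        ginv t i p * ginv t j q * R t (w i) x (w j) y * rt t (w p) (w q))
    (x y : V) :
    HasDerivAt (fun t => circRt t x y)
      (-lam * circR h x y + circR r' x y + lam * r' x y) 0 := by
  set G : ℝ → Matrix ι ι ℝ := fun t => Matrix.of fun i j => g t (w i) (w j)
  set A : ℝ → Matrix ι ι ℝ := fun t => Matrix.of fun i j => R t (w i) x (w j) y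
  have hG : ∀ t, G t = LinearMap.toMatrix₂ w w (g t) := fun t => by
    ext i j
    simp [G, LinearMap.toMatrix₂_apply]
  have hricci : ∀ t, rt t x y = ∑ i, ∑ j, (G t)⁻¹ i j * A t i j := fun t => by
    simp only [hrt, hginv, A, of_apply, hR1 t x, hR2 t (w _) x y, neg_neg]
    rfl
  have key := hasDerivAt_circContract_of_einstein (lam := lam)
    (G := G) (A := A) (K := fun t => .of fun p q => rt t (w p) (w q))
    (hasDerivAt_iff_forall_apply.2 fun i j => hg' (w i) (w j))
    (hasDerivAt_iff_forall_apply.2 fun i j => hR' (w i) x (w j) y)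
    (hasDerivAt_iff_forall_apply.2 fun p q => hr' (w p) (w q))
    (fun t => hG t ▸ LinearMap.isSymm_toMatrix₂ w (hgsymm t))
    (hG 0 ▸ LinearMap.isUnit_det_toMatrix₂_of_pos w (hgpos 0))
    (by ext p q; simp [G, hEinstein])
    ((hr' x y).congr_of_eventuallyEq (.of_forall fun t => (hricci t).symm))
  simp only [hcircR, hginv]
  exact key.congr_of_eventuallyEq (.of_forall fun t => by simp only [hcircRt, hginv]; rfl)

/-- algebraic version of Lemma 3: first variation of `∘R(r)` at an
Einstein metric: `(d/dt)|₀ [∘R_t(r_t)] = −λ·∘R(h) + ∘R(r') + λ·r'`. -/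
theorem stmt_5
    {V : Type*} [AddCommGroup V] [Module ℝ V] [FiniteDimensional ℝ V]
    {ι : Type*} [Fintype ι] [DecidableEq ι]
    (w : Module.Basis ι ℝ V)
    (g : ℝ → V →ₗ[ℝ] V →ₗ[ℝ] ℝ)
    (hgsymm : ∀ (t : ℝ) (x y : V), g t x y = g t y x)
    (hgpos : ∀ (t : ℝ) (x : V), x ≠ 0 → 0 < g t x x)
    (R : ℝ → V →ₗ[ℝ] V →ₗ[ℝ] V →ₗ[ℝ] V →ₗ[ℝ] ℝ)
    (hR1 : ∀ (t : ℝ) (x y z u : V), R t x y z u = -R t y x z u)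
    (hR2 : ∀ (t : ℝ) (x y z u : V), R t x y z u = -R t x y u z)
    (hR3 : ∀ (t : ℝ) (x y z u : V), R t x y z u = R t z u x y)
    (hBianchi : ∀ (t : ℝ) (x y z u : V),
      R t x y z u + R t y z x u + R t z x y u = 0)
    (h : V → V → ℝ) (R' : V → V → V → V → ℝ)
    (hg' : ∀ x y : V, HasDerivAt (fun t => g t x y) (h x y) 0)
    (hR' : ∀ x y z u : V, HasDerivAt (fun t => R t x y z u) (R' x y z u) 0)
    -- the inverse of the Gram matrix of `g_t` in the fixed basis `w`
    (ginv : ℝ → ι → ι → ℝ)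
    (hginv : ∀ t : ℝ, ginv t = fun i j => (Matrix.of fun i j => g t (w i) (w j))⁻¹ i j)
    -- the `g_t`-Ricci contraction of `R_t`
    (rt : ℝ → V → V → ℝ)
    (hrt : ∀ (t : ℝ) (x y : V), rt t x y = ∑ i, ∑ j, ginv t i j * R t x (w i) y (w j))
    (lam : ℝ)
    (hEinstein : ∀ x y : V, rt 0 x y = lam * g 0 x y)
    -- `r'`, the derivative of `r_t` at `t = 0`
    (r' : V → V → ℝ)
    (hr' : ∀ x y : V, HasDerivAt (fun t => rt t x y) (r' x y) 0)
    -- `∘R` taken with respect to `g_0`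
    (circR : (V → V → ℝ) → V → V → ℝ)
    (hcircR : ∀ (k : V → V → ℝ) (x y : V), circR k x y =
      ∑ i, ∑ j, ∑ p, ∑ q,
        ginv 0 i p * ginv 0 j q * R 0 (w i) x (w j) y * k (w p) (w q))
    -- `∘R_t(r_t)`
    (circRt : ℝ → V → V → ℝ)
    (hcircRt : ∀ (t : ℝ) (x y : V), circRt t x y =
      ∑ i, ∑ j, ∑ p, ∑ q,
        ginv t i p * ginv t j q * R t (w i) x (w j) y * rt t (w p) (w q))
    (x y : V) :
    HasDerivAt (fun t => circRt t x y)
      (-lam * circR h x y + circR r' x y + lam * r' x y) 0 :=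
  stmt_5_general w g hgsymm hgpos R hR1 hR2 h R' hg' hR' ginv hginv rt hrt lam hEinstein r' hr'
    circR hcircR circRt hcircRt x y
end

section
/- First variation of the tensor Ř (index form of Lemma 6): let Ř_t(x,y) := Σ g_t^{i₁i₂} g_t^{j₁j₂} g_t^{k₁k₂} R_t(x, w_{i₁}, w_{j₁}, w_{k₁}) R_t(y, w_{i₂}, w_{j₂}, w_{k₂}) (sum over all indices, {w_i} any fixed basis of V and (g_t^{ij}) the inverse of the matrix (g_t(w_i,w_j))). Then, for any g_0-orthonormal basis {v_1, …, v_n} of V and all x, y ∈ V: (d/dt)|_{t=0} Ř_t(x,y) = −Σ_{m,n} h(v_m, v_n)·[ Σ_{i,j} R(x, v_m, v_i, v_j) R(y, v_n, v_i, v_j) + 2 Σ_{i,j} R(x, v_i, v_m, v_j) R(y, v_i, v_n, v_j) ] + Σ_{i,j,k} [ R̄(x, v_i, v_j, v_k) R(y, v_i, v_j, v_k) + R(x, v_i, v_j, v_k) R̄(y, v_i, v_j, v_k) ], where R := R_0, R̄ := (d/dt)|_{t=0} R_t and h := (d/dt)|_{t=0} g_t. -/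
/-!
`Ř_t(x, y)` is a complete contraction of `R_t(x, ·, ·, ·) ⊗ R_t(y, ·, ·, ·)` against three copies
of the inverse Gram matrix of `g_t`, so it does not depend on the basis used to compute it: if `P`
is the change-of-basis matrix, the inverse Gram matrix transforms as `P (·) Pᵀ` while each slot of
the curvature coefficients transforms by `P`. We may therefore compute it in the `g_0`-orthonormal
basis `v`, where the inverse Gram matrix equals `1` at `t = 0` and has derivative `-h`. The product
rule gives five terms; the one differentiating the third copy of `g⁻¹` equals the one
differentiating the second, by antisymmetry of `R` in its last two arguments, whence the factor `2`.
-/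

open Matrix
open scoped Kronecker

section InverseDerivative

-- Any matrix norm will do; one is needed only to apply `hasFDerivAt_ringInverse`.
attribute [local instance] Matrix.linftyOpNormedRing Matrix.linftyOpNormedAlgebra

variable {ι : Type*} [Fintype ι] [DecidableEq ι] {M : ℝ → Matrix ι ι ℝ} {M' : Matrix ι ι ℝ}
  {t₀ : ℝ}

theorem hasDerivAt_matrix_of_forall_apply
    (hM : ∀ i j, HasDerivAt (fun t => M t i j) (M' i j) t₀) : HasDerivAt M M' t₀ := by
  have := HasDerivAt.fun_sum (u := Finset.univ) fun i _ =>
    HasDerivAt.fun_sum (u := Finset.univ) fun j _ => (hM i j).smul_const (single i j (1 : ℝ))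
  simp only [smul_single, smul_eq_mul, mul_one, ← matrix_eq_sum_single] at this
  exact this

theorem hasDerivAt_matrix_inv_apply
    (hM : ∀ i j, HasDerivAt (fun t => M t i j) (M' i j) t₀) (hdet : IsUnit (M t₀).det) (i j : ι) :
    HasDerivAt (fun t => (M t)⁻¹ i j) (-((M t₀)⁻¹ * M' * (M t₀)⁻¹) i j) t₀ := by
  obtain ⟨u, hu⟩ := (isUnit_iff_isUnit_det _).mpr hdet
  have hinv := (hasFDerivAt_ringInverse (𝕜 := ℝ) u).comp_hasDerivAt_of_eq t₀
    (hasDerivAt_matrix_of_forall_apply hM) hu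
  have hentry := (entryLinearMap ℝ ℝ i j).toContinuousLinearMap.hasFDerivAt.comp_hasDerivAt t₀ hinv
  simp only [← nonsing_inv_eq_ringInverse, Function.comp_def, hu, coe_units_inv, _root_.neg_apply,
    ContinuousLinearMap.mulLeftRight_apply, LinearMap.coe_toContinuousLinearMap',
    entryLinearMap_apply] at hentry
  exact hentry

theorem hasDerivAt_matrix_inv_apply_of_eq_one
    (hM : ∀ i j, HasDerivAt (fun t => M t i j) (M' i j) t₀) (hM₀ : M t₀ = 1) (i j : ι) :
    HasDerivAt (fun t => (M t)⁻¹ i j) ((-M') i j) t₀ := by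
  simpa [hM₀] using hasDerivAt_matrix_inv_apply hM (by simp [hM₀]) i j

end InverseDerivative

theorem Matrix.inv_eq_mul_inv_mul_transpose {ι κ R : Type*} [Fintype ι] [DecidableEq ι]
    [Fintype κ] [DecidableEq κ] [CommRing R] {G : Matrix ι ι R} {G' : Matrix κ κ R}
    {P : Matrix ι κ R} {Q : Matrix κ ι R} (hPQ : P * Q = 1) (hQP : Q * P = 1)
    (hG' : Pᵀ * G * P = G') : G⁻¹ = P * G'⁻¹ * Pᵀ := by
  have hG : G = Qᵀ * G' * Q := by
    rw [← hG', ← Matrix.mul_assoc, ← Matrix.mul_assoc, ← transpose_mul, hPQ, Matrix.mul_assoc,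
      hPQ, transpose_one, Matrix.one_mul, Matrix.mul_one]
  by_cases hG'u : IsUnit G'.det
  · refine inv_eq_right_inv ?_
    calc G * (P * G'⁻¹ * Pᵀ) = Qᵀ * G' * (Q * P) * G'⁻¹ * Pᵀ := by simp only [hG, Matrix.mul_assoc]
      _ = Qᵀ * Pᵀ := by rw [hQP, Matrix.mul_one, mul_nonsing_inv_cancel_right _ _ hG'u]
      _ = 1 := by rw [← transpose_mul, hPQ, transpose_one]
  · -- For singular `G'` the matrix `G` is singular too, and both sides are the junk value `0`.
    have hGu : ¬IsUnit G.det := fun hGu => hG'u <|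
      isUnit_det_of_right_inverse (B := Q * G⁻¹ * Qᵀ) <|
      calc G' * (Q * G⁻¹ * Qᵀ) = Pᵀ * G * (P * Q) * G⁻¹ * Qᵀ := by
            simp only [← hG', Matrix.mul_assoc]
        _ = 1 := by rw [hPQ, Matrix.mul_one, mul_nonsing_inv_cancel_right _ _ hGu, ← transpose_mul,
            hQP, transpose_one]
    rw [nonsing_inv_apply_not_isUnit _ hGu, nonsing_inv_apply_not_isUnit _ hG'u, Matrix.mul_zero,
      Matrix.zero_mul]

namespace Module.Basis

variable {ι κ R V : Type*} [Fintype ι] [CommRing R] [AddCommGroup V] [Module R V]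
  (w : Basis ι R V) (v : Basis κ R V)

theorem inv_gram_eq_conj [DecidableEq ι] [Fintype κ] [DecidableEq κ] (B : V →ₗ[R] V →ₗ[R] R) :
    (Matrix.of fun i j => B (w i) (w j))⁻¹ =
      w.toMatrix v * (Matrix.of fun i j => B (v i) (v j))⁻¹ * (w.toMatrix v)ᵀ := by
  refine inv_eq_mul_inv_mul_transpose (w.toMatrix_mul_toMatrix_flip v)
    (v.toMatrix_mul_toMatrix_flip w) ?_
  have hw : (Matrix.of fun i j => B (w i) (w j)) = LinearMap.toMatrix₂ w w B := by ext; simp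
  have hv : (Matrix.of fun i j => B (v i) (v j)) = LinearMap.toMatrix₂ v v B := by ext; simp
  rw [hw, hv]
  exact LinearMap.toMatrix₂_mul_basis_toMatrix w w v v B

theorem sum_toMatrix_mul_trilinear (T : V →ₗ[R] V →ₗ[R] V →ₗ[R] R) (p q r : κ) :
    ∑ i, ∑ j, ∑ k, w.toMatrix v i p * w.toMatrix v j q * w.toMatrix v k r * T (w i) (w j) (w k) =
      T (v p) (v q) (v r) := by
  conv_rhs => rw [← w.sum_toMatrix_smul_self v p, ← w.sum_toMatrix_smul_self v q,
    ← w.sum_toMatrix_smul_self v r]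
  simp only [map_sum, map_smul, LinearMap.coe_sum, Finset.sum_apply, LinearMap.smul_apply,
    smul_eq_mul, Finset.mul_sum]
  rw [Finset.sum_comm_cycle]
  refine Finset.sum_congr rfl fun k _ => ?_
  rw [Finset.sum_comm]
  exact Finset.sum_congr rfl fun j _ => Finset.sum_congr rfl fun i _ => by ring

end Module.Basis

section Contraction

variable {ι κ R : Type*} [Fintype ι] [Fintype κ] [CommSemiring R]

def contract₃ (A B C : Matrix ι ι R) (X Y : ι → ι → ι → R) : R :=
  ∑ i₁, ∑ i₂, ∑ j₁, ∑ j₂, ∑ k₁, ∑ k₂, A i₁ i₂ * B j₁ j₂ * C k₁ k₂ * X i₁ j₁ k₁ * Y i₂ j₂ k₂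

theorem contract₃_eq_dotProduct_kronecker (A B C : Matrix ι ι R) (X Y : ι → ι → ι → R) :
    contract₃ A B C X Y = (fun I : (ι × ι) × ι => X I.1.1 I.1.2 I.2) ⬝ᵥ
      (A ⊗ₖ B ⊗ₖ C) *ᵥ (fun I => Y I.1.1 I.1.2 I.2) := by
  simp only [contract₃, dotProduct, mulVec, kronecker_apply, Fintype.sum_prod_type, Finset.mul_sum]
  simp only [← Fintype.sum_prod_type']
  exact Fintype.sum_equiv
    ⟨fun ⟨i₁, i₂, j₁, j₂, k₁, k₂⟩ => ⟨i₁, j₁, k₁, i₂, j₂, k₂⟩,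
     fun ⟨i₁, j₁, k₁, i₂, j₂, k₂⟩ => ⟨i₁, i₂, j₁, j₂, k₁, k₂⟩, fun _ => rfl, fun _ => rfl⟩
    _ _ fun _ => by dsimp only [Equiv.coe_fn_mk]; ring

theorem contract₃_conj (P : Matrix κ ι R) (A B C : Matrix ι ι R) (X Y : κ → κ → κ → R) :
    contract₃ (P * A * Pᵀ) (P * B * Pᵀ) (P * C * Pᵀ) X Y =
      contract₃ A B C (fun p q r => ∑ i, ∑ j, ∑ k, P i p * P j q * P k r * X i j k)
        (fun p q r => ∑ i, ∑ j, ∑ k, P i p * P j q * P k r * Y i j k) := by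
  have hkron : (P * A * Pᵀ) ⊗ₖ (P * B * Pᵀ) ⊗ₖ (P * C * Pᵀ) =
      (P ⊗ₖ P ⊗ₖ P) * (A ⊗ₖ B ⊗ₖ C) * (P ⊗ₖ P ⊗ₖ P)ᵀ := by
    simp only [← mul_kronecker_mul, ← kroneckerMap_transpose]
  have hvec (Z : κ → κ → κ → R) : (fun I : (κ × κ) × κ => Z I.1.1 I.1.2 I.2) ᵥ* (P ⊗ₖ P ⊗ₖ P) =
      fun J => ∑ i, ∑ j, ∑ k, P i J.1.1 * P j J.1.2 * P k J.2 * Z i j k := by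
    ext J
    simp only [vecMul, dotProduct, kroneckerMap_apply, Fintype.sum_prod_type]
    exact Finset.sum_congr rfl fun _ _ => Finset.sum_congr rfl fun _ _ =>
      Finset.sum_congr rfl fun _ _ => by ring
  rw [contract₃_eq_dotProduct_kronecker, contract₃_eq_dotProduct_kronecker, hkron,
    ← mulVec_mulVec, ← mulVec_mulVec, mulVec_transpose, dotProduct_mulVec, hvec, hvec]

variable [DecidableEq ι] (H : Matrix ι ι R) (X Y : ι → ι → ι → R)

theorem contract₃_one_one_one : contract₃ 1 1 1 X Y = ∑ i, ∑ j, ∑ k, X i j k * Y i j k := by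
  simp [contract₃, one_apply]

theorem contract₃_left_one_one :
    contract₃ H 1 1 X Y = ∑ p, ∑ q, H p q * ∑ j, ∑ k, X p j k * Y q j k := by
  simp [contract₃, one_apply, Finset.mul_sum, mul_assoc]

theorem contract₃_one_middle_one :
    contract₃ 1 H 1 X Y = ∑ p, ∑ q, H p q * ∑ i, ∑ k, X i p k * Y i q k := by
  simp only [contract₃, one_apply, ite_mul, one_mul, zero_mul, mul_ite, mul_one, mul_zero,
    Finset.sum_ite_eq, Finset.mem_univ, ↓reduceIte, Finset.sum_ite_irrel, Finset.sum_const_zero,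
    Finset.mul_sum]
  conv_lhs => rw [Finset.sum_comm_cycle, Finset.sum_comm_cycle]
  exact Finset.sum_congr rfl fun _ _ => Finset.sum_congr rfl fun _ _ =>
    Finset.sum_congr rfl fun _ _ => Finset.sum_congr rfl fun _ _ => by ring

theorem contract₃_one_one_right :
    contract₃ 1 1 H X Y = ∑ p, ∑ q, H p q * ∑ i, ∑ j, X i j p * Y i j q := by
  simp only [contract₃, one_apply, mul_ite, mul_one, mul_zero, ite_mul, one_mul, zero_mul,
    Finset.sum_ite_irrel, Finset.sum_const_zero, Finset.sum_ite_eq, Finset.mem_univ, ↓reduceIte,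
    Finset.mul_sum]
  conv_lhs => rw [Finset.sum_comm_cycle]
  refine Finset.sum_congr rfl fun _ _ => ?_
  rw [Finset.sum_comm_cycle]
  exact Finset.sum_congr rfl fun _ _ => Finset.sum_congr rfl fun _ _ =>
    Finset.sum_congr rfl fun _ _ => by ring

end Contraction

theorem hasDerivAt_contract₃ {ι : Type*} [Fintype ι] {A B C : ℝ → Matrix ι ι ℝ}
    {X Y : ℝ → ι → ι → ι → ℝ} {A' B' C' : Matrix ι ι ℝ} {X' Y' : ι → ι → ι → ℝ} {t₀ : ℝ}
    (hA : ∀ i j, HasDerivAt (fun t => A t i j) (A' i j) t₀)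
    (hB : ∀ i j, HasDerivAt (fun t => B t i j) (B' i j) t₀)
    (hC : ∀ i j, HasDerivAt (fun t => C t i j) (C' i j) t₀)
    (hX : ∀ i j k, HasDerivAt (fun t => X t i j k) (X' i j k) t₀)
    (hY : ∀ i j k, HasDerivAt (fun t => Y t i j k) (Y' i j k) t₀) :
    HasDerivAt (fun t => contract₃ (A t) (B t) (C t) (X t) (Y t))
      (contract₃ A' (B t₀) (C t₀) (X t₀) (Y t₀) + contract₃ (A t₀) B' (C t₀) (X t₀) (Y t₀)
        + contract₃ (A t₀) (B t₀) C' (X t₀) (Y t₀) + contract₃ (A t₀) (B t₀) (C t₀) X' (Y t₀)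
        + contract₃ (A t₀) (B t₀) (C t₀) (X t₀) Y') t₀ := by
  have := HasDerivAt.fun_sum (u := Finset.univ) fun i₁ _ =>
    HasDerivAt.fun_sum (u := Finset.univ) fun i₂ _ =>
    HasDerivAt.fun_sum (u := Finset.univ) fun j₁ _ =>
    HasDerivAt.fun_sum (u := Finset.univ) fun j₂ _ =>
    HasDerivAt.fun_sum (u := Finset.univ) fun k₁ _ =>
    HasDerivAt.fun_sum (u := Finset.univ) fun k₂ _ =>
    ((((hA i₁ i₂).fun_mul (hB j₁ j₂)).fun_mul (hC k₁ k₂)).fun_mul (hX i₁ j₁ k₁)).fun_mul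
      (hY i₂ j₂ k₂)
  refine this.congr_deriv ?_
  simp only [contract₃, ← Finset.sum_add_distrib]
  exact Finset.sum_congr rfl fun _ _ => Finset.sum_congr rfl fun _ _ =>
    Finset.sum_congr rfl fun _ _ => Finset.sum_congr rfl fun _ _ =>
    Finset.sum_congr rfl fun _ _ => Finset.sum_congr rfl fun _ _ => by ring

section CheckCurvature

variable {ι κ R V : Type*} [Fintype ι] [DecidableEq ι] [Fintype κ] [DecidableEq κ] [CommRing R]
  [AddCommGroup V] [Module R V]

-- The tensor `Ř(x, y)` of the paper, computed in the basis `b`.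
noncomputable def checkCurvature (B : V →ₗ[R] V →ₗ[R] R)
    (T : V →ₗ[R] V →ₗ[R] V →ₗ[R] V →ₗ[R] R) (b : Module.Basis ι R V) (x y : V) : R :=
  contract₃ (of fun i j => B (b i) (b j))⁻¹ (of fun i j => B (b i) (b j))⁻¹
    (of fun i j => B (b i) (b j))⁻¹ (fun i j k => T x (b i) (b j) (b k))
    (fun i j k => T y (b i) (b j) (b k))

theorem checkCurvature_basis_change (B : V →ₗ[R] V →ₗ[R] R)
    (T : V →ₗ[R] V →ₗ[R] V →ₗ[R] V →ₗ[R] R) (w : Module.Basis ι R V) (v : Module.Basis κ R V)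
    (x y : V) : checkCurvature B T w x y = checkCurvature B T v x y := by
  rw [checkCurvature, w.inv_gram_eq_conj v, contract₃_conj]
  simp only [w.sum_toMatrix_mul_trilinear v]
  rfl

end CheckCurvature

theorem stmt_6_general
    {V : Type*} [AddCommGroup V] [Module ℝ V]
    {ι : Type*} [Fintype ι] [DecidableEq ι]
    (w : Module.Basis ι ℝ V)
    (g : ℝ → V →ₗ[ℝ] V →ₗ[ℝ] ℝ)
    (R : ℝ → V →ₗ[ℝ] V →ₗ[ℝ] V →ₗ[ℝ] V →ₗ[ℝ] ℝ)
    (hR2 : ∀ (t : ℝ) (x y z u : V), R t x y z u = -R t x y u z)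
    (h : V → V → ℝ) (R' : V → V → V → V → ℝ)
    (hg' : ∀ x y : V, HasDerivAt (fun t => g t x y) (h x y) 0)
    (hR' : ∀ x y z u : V, HasDerivAt (fun t => R t x y z u) (R' x y z u) 0)
    -- the inverse of the Gram matrix of `g_t` in the fixed basis `w`
    (ginv : ℝ → ι → ι → ℝ)
    (hginv : ∀ t : ℝ, ginv t = fun i j => (Matrix.of fun i j => g t (w i) (w j))⁻¹ i j)
    -- the tensor `Ř_t`
    (Rcheck : ℝ → V → V → ℝ)
    (hRcheck : ∀ (t : ℝ) (x y : V), Rcheck t x y =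
      ∑ i₁, ∑ i₂, ∑ j₁, ∑ j₂, ∑ k₁, ∑ k₂,
        ginv t i₁ i₂ * ginv t j₁ j₂ * ginv t k₁ k₂ *
          R t x (w i₁) (w j₁) (w k₁) * R t y (w i₂) (w j₂) (w k₂))
    -- an arbitrary `g_0`-orthonormal basis `v`
    {ι' : Type*} [Fintype ι'] [DecidableEq ι']
    (v : Module.Basis ι' ℝ V)
    (hvON : ∀ i j : ι', g 0 (v i) (v j) = if i = j then 1 else 0)
    (x y : V) :
    HasDerivAt (fun t => Rcheck t x y)
      (-(∑ p, ∑ q, h (v p) (v q) *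
          ((∑ i, ∑ j, R 0 x (v p) (v i) (v j) * R 0 y (v q) (v i) (v j))
            + 2 * ∑ i, ∑ j, R 0 x (v i) (v p) (v j) * R 0 y (v i) (v q) (v j)))
        + ∑ i, ∑ j, ∑ k,
          (R' x (v i) (v j) (v k) * R 0 y (v i) (v j) (v k)
            + R 0 x (v i) (v j) (v k) * R' y (v i) (v j) (v k))) 0 := by
  have hRcheck_eq : (fun t => Rcheck t x y) = fun t => checkCurvature (g t) (R t) v x y := by
    funext t
    rw [hRcheck, hginv, ← checkCurvature_basis_change (g t) (R t) w v]
    rfl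
  have hgram₀ : (of fun i j => g 0 (v i) (v j)) = 1 := by
    ext i j; simp [hvON, one_apply]
  set H : Matrix ι' ι' ℝ := of fun i j => h (v i) (v j) with hH
  have hinv := hasDerivAt_matrix_inv_apply_of_eq_one (M := fun t => of fun i j => g t (v i) (v j))
    (M' := H) (fun i j => hg' (v i) (v j)) hgram₀
  have hderiv := hasDerivAt_contract₃ hinv hinv hinv (fun i j k => hR' x (v i) (v j) (v k))
    (fun i j k => hR' y (v i) (v j) (v k))
  simp only [hgram₀, inv_one] at hderiv
  rw [hRcheck_eq]
  refine hderiv.congr_deriv ?_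
  have hswap (p q : ι') : ∑ i, ∑ j, R 0 x (v i) (v j) (v p) * R 0 y (v i) (v j) (v q) =
      ∑ i, ∑ j, R 0 x (v i) (v p) (v j) * R 0 y (v i) (v q) (v j) :=
    Finset.sum_congr rfl fun i _ => Finset.sum_congr rfl fun j _ => by
      rw [hR2 0 x (v i) (v j), hR2 0 y (v i) (v j), neg_mul_neg]
  rw [contract₃_left_one_one (-H), contract₃_one_middle_one (-H),
    contract₃_one_one_right (-H), contract₃_one_one_one, contract₃_one_one_one]
  simp only [hH, Matrix.neg_apply, of_apply, hswap, two_mul, mul_add, neg_mul,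
    Finset.sum_add_distrib, Finset.sum_neg_distrib]
  ring

/-- index form of Lemma 6: first variation of the tensor `Ř`. -/
theorem stmt_6
    {V : Type*} [AddCommGroup V] [Module ℝ V] [FiniteDimensional ℝ V]
    {ι : Type*} [Fintype ι] [DecidableEq ι]
    (w : Module.Basis ι ℝ V)
    (g : ℝ → V →ₗ[ℝ] V →ₗ[ℝ] ℝ)
    (hgsymm : ∀ (t : ℝ) (x y : V), g t x y = g t y x)
    (hgpos : ∀ (t : ℝ) (x : V), x ≠ 0 → 0 < g t x x)
    (R : ℝ → V →ₗ[ℝ] V →ₗ[ℝ] V →ₗ[ℝ] V →ₗ[ℝ] ℝ)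
    (hR1 : ∀ (t : ℝ) (x y z u : V), R t x y z u = -R t y x z u)
    (hR2 : ∀ (t : ℝ) (x y z u : V), R t x y z u = -R t x y u z)
    (hR3 : ∀ (t : ℝ) (x y z u : V), R t x y z u = R t z u x y)
    (hBianchi : ∀ (t : ℝ) (x y z u : V),
      R t x y z u + R t y z x u + R t z x y u = 0)
    (h : V → V → ℝ) (R' : V → V → V → V → ℝ)
    (hg' : ∀ x y : V, HasDerivAt (fun t => g t x y) (h x y) 0)
    (hR' : ∀ x y z u : V, HasDerivAt (fun t => R t x y z u) (R' x y z u) 0)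
    -- the inverse of the Gram matrix of `g_t` in the fixed basis `w`
    (ginv : ℝ → ι → ι → ℝ)
    (hginv : ∀ t : ℝ, ginv t = fun i j => (Matrix.of fun i j => g t (w i) (w j))⁻¹ i j)
    -- the tensor `Ř_t`
    (Rcheck : ℝ → V → V → ℝ)
    (hRcheck : ∀ (t : ℝ) (x y : V), Rcheck t x y =
      ∑ i₁, ∑ i₂, ∑ j₁, ∑ j₂, ∑ k₁, ∑ k₂,
        ginv t i₁ i₂ * ginv t j₁ j₂ * ginv t k₁ k₂ *
          R t x (w i₁) (w j₁) (w k₁) * R t y (w i₂) (w j₂) (w k₂))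
    -- an arbitrary `g_0`-orthonormal basis `v`
    {ι' : Type*} [Fintype ι'] [DecidableEq ι']
    (v : Module.Basis ι' ℝ V)
    (hvON : ∀ i j : ι', g 0 (v i) (v j) = if i = j then 1 else 0)
    (x y : V) :
    HasDerivAt (fun t => Rcheck t x y)
      (-(∑ p, ∑ q, h (v p) (v q) *
          ((∑ i, ∑ j, R 0 x (v p) (v i) (v j) * R 0 y (v q) (v i) (v j))
            + 2 * ∑ i, ∑ j, R 0 x (v i) (v p) (v j) * R 0 y (v i) (v q) (v j)))
        + ∑ i, ∑ j, ∑ k,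
          (R' x (v i) (v j) (v k) * R 0 y (v i) (v j) (v k)
            + R 0 x (v i) (v j) (v k) * R' y (v i) (v j) (v k))) 0 :=
  stmt_6_general w g R hR2 h R' hg' hR' ginv hginv Rcheck hRcheck v hvON x y
end
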